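/- No unbounded lower bound: there is no partial computable function ψ : ℕ ⇀ ℕ which is unbounded on its domain and satisfies ψ(x) ≤ K(x) for all x in its domain. -/

import Mathlib

/-- Kolmogorov complexity associated to a partial function `ψ : {0,1}* ⇀ α`:
the least length of a word `p` with `ψ(p) = y` (with `min ∅ = ⊤` in `ℕ∞`). -/
noncomputable def Kf {α : Type} (ψ : List Bool →. α) (y : α) : ℕ∞ :=
  sInf {n : ℕ∞ | ∃ p : List Bool, y ∈ ψ p ∧ (p.length : ℕ∞) = n}

/-- `V` is optimal: it is partial computable and `K_V` is minimal, up to an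
additive constant, among the `K_φ` for `φ` partial computable. -/
def OptimalFn {α : Type} [Primcodable α] (V : List Bool →. α) : Prop :=
  Partrec V ∧ ∀ φ : List Bool →. α, Partrec φ →
    ∃ c : ℕ, ∀ y : α, Kf V y ≤ Kf φ y + (c : ℕ∞)

/-! A Berry-paradox argument. Given `n`, search the graph of `ψ` for some `x` with
`ψ(x) ≥ 2 ^ n`; this search is partial computable in `n`, and reading `n` off as the length of
an input word shows `K(x) ≤ n + O(1)`. Since also `K(x) ≥ ψ(x) ≥ 2 ^ n`, this fails for large `n`. -/

open Nat.Partrec.Code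

theorem Partrec.exists_search_graph {β : Type} [Primcodable β] {ψ : ℕ →. ℕ} (hψ : Partrec ψ)
    {r : β → ℕ → Prop} [DecidableRel r] (hr : PrimrecRel r) :
    ∃ G : β →. ℕ, Partrec G ∧ (∀ b, (∃ x, ∃ m ∈ ψ x, r b m) → (G b).Dom) ∧
      ∀ b x, x ∈ G b → ∃ m ∈ ψ x, r b m := by
  obtain ⟨c, rfl⟩ := exists_code.1 (Partrec.nat_iff.1 hψ)
  -- stage `k = ⟪x, s⟫` of the search runs `c` on `x` for `s` steps
  let f : β → ℕ → Option ℕ := fun b k =>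
    (evaln k.unpair.2 c k.unpair.1).bind fun m => if r b m then some k.unpair.1 else Option.none
  have hf : Computable₂ f := by
    refine Primrec.to_comp <| Primrec.option_bind ?_ ?_
    · exact primrec_evaln.comp <| Primrec.pair
        (Primrec.pair (Primrec.snd.comp (Primrec.unpair.comp Primrec.snd)) (Primrec.const c))
        (Primrec.fst.comp (Primrec.unpair.comp Primrec.snd))
    · exact (Primrec.ite (hr.comp (Primrec.fst.comp Primrec.fst) Primrec.snd)
        (Primrec.option_some.comp
          (Primrec.fst.comp (Primrec.unpair.comp (Primrec.snd.comp Primrec.fst))))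
        (Primrec.const Option.none)).to₂
  refine ⟨fun b => Nat.rfindOpt (f b), Partrec.rfindOpt hf, ?_, ?_⟩
  · rintro b ⟨x, m, hm, hrm⟩
    obtain ⟨s, hs⟩ := evaln_complete.1 hm
    refine Nat.rfindOpt_dom.2 ⟨Nat.pair x s, x, ?_⟩
    simp [f, Option.mem_def.1 hs, hrm]
  · intro b x hx
    obtain ⟨k, hk⟩ := Nat.rfindOpt_spec hx
    simp only [f, Option.mem_def, Option.bind_eq_some_iff, Option.ite_none_right_eq_some,
      Option.some_inj] at hk
    obtain ⟨m, hm, hrm, rfl⟩ := hk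
    exact ⟨m, evaln_sound hm, hrm⟩

theorem Kf_le_length {α : Type} {φ : List Bool →. α} {p : List Bool} {y : α} (h : y ∈ φ p) :
    Kf φ y ≤ p.length :=
  sInf_le ⟨p, h, rfl⟩

theorem Primrec.two_pow : Primrec (fun n : ℕ => 2 ^ n) :=
  Primrec.nat_iff.2 <|
    (Nat.Primrec.pow.comp ((Nat.Primrec.const 2).pair .id)).of_eq fun n => by simp

theorem OptimalFn.exists_Kf_le_of_mem_two_pow {α : Type} [Primcodable α]
    {V : List Bool →. α} (hV : OptimalFn V) {G : ℕ →. α} (hG : Partrec G) :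
    ∃ d : ℕ, ∀ (n : ℕ) x, x ∈ G (2 ^ n) → Kf V x ≤ n + d := by
  let φ : List Bool →. α := fun p => G (2 ^ p.length)
  obtain ⟨d, hd⟩ := hV.2 φ (hG.comp (Primrec.two_pow.comp Primrec.list_length).to_comp)
  refine ⟨d, fun n x hx => (hd x).trans ?_⟩
  have : x ∈ φ (List.replicate n false) := by simpa [φ] using hx
  simpa using add_le_add_right (Kf_le_length this) (d : ℕ∞)

/-- No partial computable function which is unbounded on its domain
can be a lower bound for `K`. -/
theorem no_unbounded_pc_lower_bound (V : List Bool →. ℕ) (hV : OptimalFn V) :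
    ¬ ∃ ψ : ℕ →. ℕ, Partrec ψ ∧
        (∀ n : ℕ, ∃ x : ℕ, ∃ m ∈ ψ x, n ≤ m) ∧
        (∀ x : ℕ, ∀ m ∈ ψ x, (m : ℕ∞) ≤ Kf V x) := by
  rintro ⟨ψ, hψ, hunbounded, hlower⟩
  obtain ⟨G, hG, hGdom, hGspec⟩ := hψ.exists_search_graph Primrec.nat_le
  obtain ⟨d, hd⟩ := hV.exists_Kf_le_of_mem_two_pow hG
  let n := d + 2
  obtain ⟨x, hx⟩ := Part.dom_iff_mem.1 (hGdom _ (hunbounded (2 ^ n)))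
  obtain ⟨m, hm, hnm⟩ := hGspec _ _ hx
  have hle : 2 ^ n ≤ n + d := by
    have : ((2 ^ n : ℕ) : ℕ∞) ≤ ((n + d : ℕ) : ℕ∞) := calc
      ((2 ^ n : ℕ) : ℕ∞) ≤ m := Nat.cast_le.2 hnm
      _ ≤ Kf V x := hlower x m hm
      _ ≤ ((n + d : ℕ) : ℕ∞) := by exact_mod_cast hd n x hx
    exact_mod_cast this
  have hpow : 2 ^ n = 4 * 2 ^ d := by ring
  have hd_lt : d < 2 ^ d := Nat.lt_two_pow_self
  omega
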